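/- For every n, there exists a set S of real numbers whose n-th derived set is nonempty but whose (n+1)-st derived set is empty. -/

import Mathlib

def derivedSetR (S : Set ℝ) : Set ℝ := {p : ℝ | AccPt p (Filter.principal S)}

/-!
For `D ⊆ [0, 1]` let `W D := shrinkingCopies D` consist of `0` and the copies
`2⁻¹ ^ (k + 1) * (D + 1) ⊆ (0, 2⁻¹ ^ k]`, `k ∈ ℕ`. Derived sets commute with homeomorphisms, only finitely many copies come near a point
`p > 0`, and the copies accumulate at `0`; hence `(W D)' = W (D')` whenever `D` is nonempty.
Applying `W` `n` times to `{0}` gives a set whose `n`-th derived set is `{0}`.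
-/

open Set

section DerivedSet

variable {X Y : Type*} [TopologicalSpace X] [TopologicalSpace Y]

lemma Homeomorph.image_derivedSet (e : X ≃ₜ Y) (A : Set X) :
    e '' derivedSet A = derivedSet (e '' A) := by
  refine (e.continuous.image_derivedSet e.injective).antisymm ?_
  calc derivedSet (e '' A) = e '' (e.symm '' derivedSet (e '' A)) := by
        rw [e.image_symm, e.image_preimage]
    _ ⊆ e '' derivedSet (e.symm '' (e '' A)) :=
        image_mono (e.symm.continuous.image_derivedSet e.symm.injective)
    _ = e '' derivedSet A := by rw [e.image_symm, e.preimage_image]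

lemma derivedSet_empty : derivedSet (∅ : Set X) = ∅ :=
  subset_empty_iff.mp (by simpa using derivedSet_subset_closure (∅ : Set X))

lemma derivedSet_singleton [T1Space X] (x : X) : derivedSet ({x} : Set X) = ∅ := by
  refine eq_empty_of_forall_notMem fun y hy => ?_
  obtain rfl : y = x := by simpa using derivedSet_subset_closure _ hy
  obtain ⟨z, ⟨-, rfl⟩, hzy⟩ := accPt_iff_nhds.mp hy univ Filter.univ_mem
  exact hzy rfl

lemma derivedSet_biUnion_finset {ι : Type*} (s : Finset ι) (f : ι → Set X) :
    derivedSet (⋃ i ∈ s, f i) = ⋃ i ∈ s, derivedSet (f i) := by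
  classical
  induction s using Finset.induction_on with
  | empty => simp [derivedSet_empty]
  | insert i s _ ih => simp only [Finset.set_biUnion_insert, derivedSet_union, ih]

lemma Set.Nonempty.of_derivedSet {A : Set X} (h : (derivedSet A).Nonempty) : A.Nonempty :=
  closure_nonempty_iff.mp (h.mono (derivedSet_subset_closure A))

lemma derivedSet_subset_of_subset_of_isClosed {A C : Set X} (hAC : A ⊆ C) (hC : IsClosed C) :
    derivedSet A ⊆ C :=
  (derivedSet_subset_closure A).trans (closure_minimal hAC hC)

end DerivedSet

noncomputable def shrink (k : ℕ) : ℝ ≃ₜ ℝ :=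
  (Homeomorph.addRight 1).trans (Homeomorph.mulLeft₀ (2⁻¹ ^ (k + 1)) (by positivity))

lemma shrink_apply (k : ℕ) (x : ℝ) : shrink k x = 2⁻¹ ^ (k + 1) * (x + 1) := rfl

lemma shrink_mem_Ioc {k : ℕ} {x : ℝ} (hx : x ∈ Icc (0 : ℝ) 1) :
    shrink k x ∈ Ioc (0 : ℝ) (2⁻¹ ^ k) := by
  rw [shrink_apply, pow_succ]
  constructor
  · have := hx.1
    positivity
  · nlinarith [hx.2, pow_pos (by norm_num : (0 : ℝ) < 2⁻¹) k]

lemma Ioc_two_inv_pow_subset_Icc (k : ℕ) : Ioc (0 : ℝ) (2⁻¹ ^ k) ⊆ Icc 0 1 :=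
  Ioc_subset_Icc_self.trans (Icc_subset_Icc_right (pow_le_one₀ (by norm_num) (by norm_num)))

def shrinkingCopies (D : Set ℝ) : Set ℝ := insert 0 (⋃ k, shrink k '' D)

lemma shrinkingCopies_subset_Icc {D : Set ℝ} (hD : D ⊆ Icc 0 1) :
    shrinkingCopies D ⊆ Icc 0 1 := by
  refine insert_subset (left_mem_Icc.mpr zero_le_one) (iUnion_subset fun k => ?_)
  rintro _ ⟨x, hx, rfl⟩
  exact Ioc_two_inv_pow_subset_Icc k (shrink_mem_Ioc (hD hx))

lemma shrinkingCopies_subset_biUnion_union_Icc {D : Set ℝ} (hD : D ⊆ Icc 0 1) (N : ℕ) :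
    shrinkingCopies D ⊆ (⋃ k ∈ Finset.range N, shrink k '' D) ∪ Icc 0 (2⁻¹ ^ N) := by
  rintro _ (rfl | hp)
  · exact Or.inr ⟨le_rfl, by positivity⟩
  obtain ⟨k, x, hx, rfl⟩ := mem_iUnion.mp hp
  rcases lt_or_ge k N with hk | hk
  · exact Or.inl (mem_biUnion (Finset.mem_range.mpr hk) ⟨x, hx, rfl⟩)
  · have hmem := shrink_mem_Ioc (k := k) (hD hx)
    exact Or.inr ⟨hmem.1.le, hmem.2.trans (pow_le_pow_of_le_one (by norm_num) (by norm_num) hk)⟩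

lemma derivedSet_shrinkingCopies_subset {D : Set ℝ} (hD : D ⊆ Icc 0 1) :
    derivedSet (shrinkingCopies D) ⊆ shrinkingCopies (derivedSet D) := by
  intro p hp
  have hp01 := derivedSet_subset_of_subset_of_isClosed (shrinkingCopies_subset_Icc hD)
    isClosed_Icc hp
  rcases hp01.1.eq_or_lt with rfl | hp_pos
  · exact mem_insert 0 _
  -- The copies beyond the `N`-th stay in `[0, 2⁻¹ ^ N]`, away from `p`.
  obtain ⟨N, hN⟩ := exists_pow_lt_of_lt_one hp_pos (by norm_num : (2⁻¹ : ℝ) < 1)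
  have hp' := derivedSet_mono _ _ (shrinkingCopies_subset_biUnion_union_Icc hD N) hp
  rw [derivedSet_union, derivedSet_biUnion_finset] at hp'
  rcases hp' with hp' | hp'
  · obtain ⟨k, -, hk⟩ := mem_iUnion₂.mp hp'
    rw [← Homeomorph.image_derivedSet] at hk
    exact mem_insert_of_mem 0 (mem_iUnion_of_mem k hk)
  · have := (derivedSet_subset_of_subset_of_isClosed subset_rfl isClosed_Icc hp').2
    linarith

lemma zero_mem_derivedSet_shrinkingCopies {D : Set ℝ} (hD : D ⊆ Icc 0 1) (hne : D.Nonempty) :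
    (0 : ℝ) ∈ derivedSet (shrinkingCopies D) := by
  obtain ⟨x, hx⟩ := hne
  rw [mem_derivedSet, accPt_iff_nhds]
  intro U hU
  obtain ⟨ε, hε, hball⟩ := Metric.mem_nhds_iff.mp hU
  obtain ⟨k, hk⟩ := exists_pow_lt_of_lt_one hε (by norm_num : (2⁻¹ : ℝ) < 1)
  have hmem := shrink_mem_Ioc (k := k) (hD hx)
  refine ⟨shrink k x, ⟨hball ?_, mem_insert_of_mem 0 (mem_iUnion_of_mem k ⟨x, hx, rfl⟩)⟩,
    hmem.1.ne'⟩
  rw [Metric.mem_ball, Real.dist_0_eq_abs, abs_of_pos hmem.1]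
  exact hmem.2.trans_lt hk

lemma derivedSet_shrinkingCopies {D : Set ℝ} (hD : D ⊆ Icc 0 1) (hne : D.Nonempty) :
    derivedSet (shrinkingCopies D) = shrinkingCopies (derivedSet D) := by
  refine (derivedSet_shrinkingCopies_subset hD).antisymm
    (insert_subset (zero_mem_derivedSet_shrinkingCopies hD hne) (iUnion_subset fun k => ?_))
  rw [Homeomorph.image_derivedSet]
  exact derivedSet_mono _ _ fun y hy => mem_insert_of_mem 0 (mem_iUnion_of_mem k hy)

lemma derivedSet_iterate_subset_Icc {D : Set ℝ} (hD : D ⊆ Icc 0 1) (m : ℕ) :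
    derivedSet^[m] D ⊆ Icc 0 1 := by
  induction m with
  | zero => exact hD
  | succ m ih =>
    rw [Function.iterate_succ_apply']
    exact derivedSet_subset_of_subset_of_isClosed ih isClosed_Icc

lemma derivedSet_iterate_shrinkingCopies {D : Set ℝ} (hD : D ⊆ Icc 0 1) {m : ℕ}
    (hne : (derivedSet^[m] D).Nonempty) :
    derivedSet^[m] (shrinkingCopies D) = shrinkingCopies (derivedSet^[m] D) := by
  induction m with
  | zero => rfl
  | succ m ih =>
    rw [Function.iterate_succ_apply'] at hne
    rw [Function.iterate_succ_apply', Function.iterate_succ_apply', ih hne.of_derivedSet,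
      derivedSet_shrinkingCopies (derivedSet_iterate_subset_Icc hD m) hne.of_derivedSet]

noncomputable def iteratedCopies : ℕ → Set ℝ
  | 0 => {0}
  | n + 1 => shrinkingCopies (iteratedCopies n)

lemma iteratedCopies_subset_Icc (n : ℕ) : iteratedCopies n ⊆ Icc 0 1 := by
  induction n with
  | zero => exact singleton_subset_iff.mpr (left_mem_Icc.mpr zero_le_one)
  | succ n ih => exact shrinkingCopies_subset_Icc ih

lemma derivedSet_iterate_iteratedCopies (n : ℕ) : derivedSet^[n] (iteratedCopies n) = {0} := by
  induction n with
  | zero => rfl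
  | succ n ih =>
    have hne : (derivedSet^[n] (iteratedCopies n)).Nonempty := ih ▸ singleton_nonempty 0
    rw [Function.iterate_succ_apply', iteratedCopies,
      derivedSet_iterate_shrinkingCopies (iteratedCopies_subset_Icc n) hne, ih,
      derivedSet_shrinkingCopies (D := {0}) (iteratedCopies_subset_Icc 0) (singleton_nonempty 0),
      derivedSet_singleton]
    simp [shrinkingCopies]

theorem exists_set_with_nth_derived_nonempty_and_next_empty (n : ℕ) :
    ∃ S : Set ℝ, (derivedSetR^[n] S).Nonempty ∧ derivedSetR^[n + 1] S = ∅ := by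
  have hR : derivedSetR = derivedSet := rfl
  refine ⟨iteratedCopies n, ?_, ?_⟩ <;> rw [hR]
  · rw [derivedSet_iterate_iteratedCopies]
    exact singleton_nonempty 0
  · rw [Function.iterate_succ_apply', derivedSet_iterate_iteratedCopies, derivedSet_singleton]
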